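/- arXiv:1907.07331 — 2 statements merged into one kernel-verified Lean document; each statement's English description precedes it below -/
import Mathlib

section
/- The inverse of the IB-learnability threshold equals the hypercontractivity coefficient: 1/β₀ = ξ(X;Y) = sup over Z obeying the Markov chain Z − X − Y of I(Y;Z)/I(X;Z), where β₀ is the infimum of the set of β for which (X,Y) is IB_β-learnable. -/
open Filter Asymptotics
open scoped BigOperators Topology

/-- A joint probability distribution `p(x,y)` on finite types `X` and `Y`. -/
structure JointDist (X Y : Type) [Fintype X] [Fintype Y] where
  p : X → Y → ℝ
  nonneg : ∀ x y, 0 ≤ p x y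
  sum_one : ∑ x, ∑ y, p x y = 1

variable {X Y Z : Type} [Fintype X] [Fintype Y] [Fintype Z]

/-- The marginal distribution `p(x)` of `X`. -/
def JointDist.pX (P : JointDist X Y) (x : X) : ℝ := ∑ y, P.p x y

/-- The marginal distribution `p(y)` of `Y`. -/
def JointDist.pY (P : JointDist X Y) (y : Y) : ℝ := ∑ x, P.p x y

/-- An encoder: a conditional distribution `p(z|x)` specifying a representation `Z` of `X`;
together with `p(x,y)` it determines the Markov chain `Z ← X ↔ Y`. -/
structure Encoder (X Z : Type) [Fintype X] [Fintype Z] where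
  c : X → Z → ℝ
  nonneg : ∀ x z, 0 ≤ c x z
  sum_one : ∀ x, ∑ z, c x z = 1

/-- The mutual information `I(X;Z)` of the representation given by encoder `e`,
where `p(x,z) = p(x) p(z|x)` and `p(z) = ∑ x, p(x) p(z|x)`. -/
noncomputable def IXZ (P : JointDist X Y) (e : Encoder X Z) : ℝ :=
  ∑ x, ∑ z, P.pX x * e.c x z *
    Real.log (P.pX x * e.c x z / (P.pX x * ∑ x', P.pX x' * e.c x' z))

/-- The mutual information `I(Y;Z)`, using the Markov chain `Z ← X ↔ Y`,
i.e. `p(y,z) = ∑ x, p(x,y) p(z|x)`. -/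
noncomputable def IYZ (P : JointDist X Y) (e : Encoder X Z) : ℝ :=
  ∑ y, ∑ z, (∑ x, P.p x y * e.c x z) *
    Real.log ((∑ x, P.p x y * e.c x z) / (P.pY y * ∑ x, P.pX x * e.c x z))

/-- The Information Bottleneck objective `IB_β(X,Y;Z) = I(X;Z) − β·I(Y;Z)`. -/
noncomputable def IB (P : JointDist X Y) (β : ℝ) (e : Encoder X Z) : ℝ :=
  IXZ P e - β * IYZ P e

/-- `(X,Y)` is `IB_β`-learnable if some representation `Z` (given by some encoder `p₁(z|x)`)
achieves `IB_β(X,Y;Z) < 0`, where `0` is the value attained by the trivial representation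
`p(z|x) = p(z)`. -/
def IBLearnable (P : JointDist X Y) (β : ℝ) : Prop :=
  ∃ (n : ℕ) (e : Encoder X (Fin n)), IB P β e < 0

/-- The hypercontractivity coefficient
`ξ(X;Y) = sup_{Z − X − Y, I(X;Z) > 0} I(Y;Z)/I(X;Z)`. -/
noncomputable def hyperXi (P : JointDist X Y) : ℝ :=
  sSup {r : ℝ | ∃ (n : ℕ) (e : Encoder X (Fin n)), 0 < IXZ P e ∧ r = IYZ P e / IXZ P e}

/-- The IB-learnability threshold `β₀`: the infimum of the set of `β` for which `(X,Y)` is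
`IB_β`-learnable. -/
noncomputable def betaThreshold (P : JointDist X Y) : ℝ :=
  sInf {β : ℝ | IBLearnable P β}

lemma key_ineq (a b : ℝ) (ha : 0 ≤ a) (hb : 0 ≤ b) (hab : 0 < a → 0 < b) :
    a - b ≤ a * Real.log (a / b) := by
  rcases ha.lt_or_eq with h | h
  · have hb' := hab h
    have h1 : Real.log (b / a) ≤ b / a - 1 := Real.log_le_sub_one_of_pos (by positivity)
    have h2 : Real.log (a / b) = - Real.log (b / a) := by
      rw [← Real.log_inv, inv_div]
    have h3 : a * (b / a) = b := by field_simp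
    rw [h2]
    have h4 := mul_le_mul_of_nonneg_left h1 h.le
    rw [mul_sub, h3, mul_one] at h4
    linarith
  · simp [← h]; linarith

lemma pX_nonneg (P : JointDist X Y) (x : X) : 0 ≤ P.pX x :=
  Finset.sum_nonneg fun y _ => P.nonneg x y

lemma pY_nonneg (P : JointDist X Y) (y : Y) : 0 ≤ P.pY y :=
  Finset.sum_nonneg fun x _ => P.nonneg x y

lemma p_le_pX (P : JointDist X Y) (x : X) (y : Y) : P.p x y ≤ P.pX x :=
  Finset.single_le_sum (fun y _ => P.nonneg x y) (Finset.mem_univ y)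

lemma p_le_pY (P : JointDist X Y) (x : X) (y : Y) : P.p x y ≤ P.pY y :=
  Finset.single_le_sum (fun x _ => P.nonneg x y) (Finset.mem_univ x)

lemma sum_pX (P : JointDist X Y) : ∑ x, P.pX x = 1 := P.sum_one

lemma sum_pY (P : JointDist X Y) : ∑ y, P.pY y = 1 := by
  rw [show ∑ y, P.pY y = ∑ y, ∑ x, P.p x y from rfl, Finset.sum_comm]
  exact P.sum_one

lemma Q_nonneg (P : JointDist X Y) (e : Encoder X Z) (z : Z) :
    0 ≤ ∑ x, P.pX x * e.c x z :=
  Finset.sum_nonneg fun x _ => mul_nonneg (pX_nonneg P x) (e.nonneg x z)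

lemma Q_ge (P : JointDist X Y) (e : Encoder X Z) (x : X) (z : Z) :
    P.pX x * e.c x z ≤ ∑ x', P.pX x' * e.c x' z :=
  Finset.single_le_sum (fun x' _ => mul_nonneg (pX_nonneg P x') (e.nonneg x' z))
    (Finset.mem_univ x)

lemma sum_Q (P : JointDist X Y) (e : Encoder X Z) :
    ∑ z, ∑ x, P.pX x * e.c x z = 1 := by
  rw [Finset.sum_comm]
  simp only [← Finset.mul_sum, e.sum_one, mul_one]
  exact sum_pX P

lemma R_nonneg (P : JointDist X Y) (e : Encoder X Z) (y : Y) (z : Z) :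
    0 ≤ ∑ x, P.p x y * e.c x z :=
  Finset.sum_nonneg fun x _ => mul_nonneg (P.nonneg x y) (e.nonneg x z)

lemma sum_R (P : JointDist X Y) (e : Encoder X Z) :
    ∑ y, ∑ z, ∑ x, P.p x y * e.c x z = 1 := by
  have : ∀ y, ∑ z, ∑ x, P.p x y * e.c x z = ∑ x, P.p x y := by
    intro y
    rw [Finset.sum_comm]
    simp only [← Finset.mul_sum, e.sum_one, mul_one]
  simp only [this]
  rw [Finset.sum_comm]
  exact P.sum_one

lemma pos_parts {a b : ℝ} (ha : 0 ≤ a) (hb : 0 ≤ b) (h : 0 < a * b) : 0 < a ∧ 0 < b := by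
  constructor
  · rcases ha.lt_or_eq with h' | h'
    · exact h'
    · exfalso; rw [← h'] at h; simp at h
  · rcases hb.lt_or_eq with h' | h'
    · exact h'
    · exfalso; rw [← h'] at h; simp at h

lemma IXZ_nonneg (P : JointDist X Y) (e : Encoder X Z) : 0 ≤ IXZ P e := by
  have hkey : ∀ x z,
      P.pX x * e.c x z - P.pX x * (∑ x', P.pX x' * e.c x' z) ≤
      P.pX x * e.c x z *
        Real.log (P.pX x * e.c x z / (P.pX x * ∑ x', P.pX x' * e.c x' z)) := by
    intro x z
    apply key_ineq
    · exact mul_nonneg (pX_nonneg P x) (e.nonneg x z)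
    · exact mul_nonneg (pX_nonneg P x) (Q_nonneg P e z)
    · intro h
      obtain ⟨hx, hc⟩ := pos_parts (pX_nonneg P x) (e.nonneg x z) h
      exact mul_pos hx (lt_of_lt_of_le h (Q_ge P e x z))
  have hsum : IXZ P e ≥ ∑ x, ∑ z,
      (P.pX x * e.c x z - P.pX x * (∑ x', P.pX x' * e.c x' z)) := by
    apply Finset.sum_le_sum; intro x _
    apply Finset.sum_le_sum; intro z _
    exact hkey x z
  have h1 : ∑ x, ∑ z, (P.pX x * e.c x z - P.pX x * (∑ x', P.pX x' * e.c x' z)) = 0 := by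
    simp only [Finset.sum_sub_distrib]
    have hA : ∑ x, ∑ z, P.pX x * e.c x z = 1 := by
      simp only [← Finset.mul_sum, e.sum_one, mul_one]; exact sum_pX P
    have hB : ∑ x, ∑ z, P.pX x * (∑ x', P.pX x' * e.c x' z) = 1 := by
      simp only [← Finset.mul_sum]
      rw [show ∑ x, P.pX x * ∑ z, ∑ x', P.pX x' * e.c x' z
          = (∑ x, P.pX x) * (∑ z, ∑ x', P.pX x' * e.c x' z) from (Finset.sum_mul ..).symm,
        sum_Q P e, sum_pX P, mul_one]
    rw [hA, hB]; ring
  linarith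

lemma IYZ_nonneg (P : JointDist X Y) (e : Encoder X Z) : 0 ≤ IYZ P e := by
  have hkey : ∀ y z,
      (∑ x, P.p x y * e.c x z) - P.pY y * (∑ x, P.pX x * e.c x z) ≤
      (∑ x, P.p x y * e.c x z) *
        Real.log ((∑ x, P.p x y * e.c x z) / (P.pY y * ∑ x, P.pX x * e.c x z)) := by
    intro y z
    apply key_ineq
    · exact R_nonneg P e y z
    · exact mul_nonneg (pY_nonneg P y) (Q_nonneg P e z)
    · intro h
      have : (∑ _x : X, (0:ℝ)) < ∑ x, P.p x y * e.c x z := by simpa using h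
      obtain ⟨x, -, hx⟩ := Finset.exists_lt_of_sum_lt this
      obtain ⟨hp, hc⟩ := pos_parts (P.nonneg x y) (e.nonneg x z) hx
      have hpY : 0 < P.pY y := lt_of_lt_of_le hp (p_le_pY P x y)
      have hpX : 0 < P.pX x := lt_of_lt_of_le hp (p_le_pX P x y)
      have hQ : 0 < ∑ x', P.pX x' * e.c x' z :=
        lt_of_lt_of_le (mul_pos hpX hc) (Q_ge P e x z)
      exact mul_pos hpY hQ
  have hsum : IYZ P e ≥ ∑ y, ∑ z,
      ((∑ x, P.p x y * e.c x z) - P.pY y * (∑ x, P.pX x * e.c x z)) := by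
    apply Finset.sum_le_sum; intro y _
    apply Finset.sum_le_sum; intro z _
    exact hkey y z
  have h1 : ∑ y, ∑ z,
      ((∑ x, P.p x y * e.c x z) - P.pY y * (∑ x, P.pX x * e.c x z)) = 0 := by
    simp only [Finset.sum_sub_distrib]
    rw [sum_R P e]
    have hB : ∑ y, ∑ z, P.pY y * (∑ x, P.pX x * e.c x z) = 1 := by
      simp only [← Finset.mul_sum]
      rw [show ∑ y, P.pY y * ∑ z, ∑ x, P.pX x * e.c x z
          = (∑ y, P.pY y) * (∑ z, ∑ x, P.pX x * e.c x z) from (Finset.sum_mul ..).symm,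
        sum_Q P e, sum_pY P, mul_one]
    rw [hB]; ring
  linarith

lemma IXZ_eq (P : JointDist X Y) (e : Encoder X Z) :
    IXZ P e = ∑ x, ∑ y, ∑ z, P.p x y * e.c x z *
      Real.log (e.c x z / ∑ x', P.pX x' * e.c x' z) := by
  rw [IXZ]
  apply Finset.sum_congr rfl
  intro x _
  have hterm : ∀ z, P.pX x * e.c x z *
      Real.log (P.pX x * e.c x z / (P.pX x * ∑ x', P.pX x' * e.c x' z)) =
      P.pX x * e.c x z * Real.log (e.c x z / ∑ x', P.pX x' * e.c x' z) := by
    intro z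
    by_cases hx : P.pX x = 0
    · simp [hx]
    · rw [mul_div_mul_left _ _ hx]
  simp only [hterm]
  rw [Finset.sum_comm]
  apply Finset.sum_congr rfl
  intro z _
  rw [show P.pX x = ∑ y, P.p x y from rfl, Finset.sum_mul, Finset.sum_mul]

lemma IYZ_eq (P : JointDist X Y) (e : Encoder X Z) :
    IYZ P e = ∑ x, ∑ y, ∑ z, P.p x y * e.c x z *
      Real.log ((∑ x', P.p x' y * e.c x' z) / (P.pY y * ∑ x', P.pX x' * e.c x' z)) := by
  rw [IYZ]
  rw [Finset.sum_comm (γ := X)]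
  apply Finset.sum_congr rfl
  intro y _
  rw [Finset.sum_comm (γ := X)]
  apply Finset.sum_congr rfl
  intro z _
  rw [Finset.sum_mul]

lemma dpi_pointwise (P : JointDist X Y) (e : Encoder X Z) (x : X) (y : Y) (z : Z) :
    P.p x y * e.c x z - P.p x y * (∑ x', P.p x' y * e.c x' z) / P.pY y ≤
    P.p x y * e.c x z * Real.log (e.c x z / ∑ x', P.pX x' * e.c x' z) -
    P.p x y * e.c x z *
      Real.log ((∑ x', P.p x' y * e.c x' z) / (P.pY y * ∑ x', P.pX x' * e.c x' z)) := by
  by_cases ha : 0 < P.p x y * e.c x z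
  · obtain ⟨hp, hc⟩ := pos_parts (P.nonneg x y) (e.nonneg x z) ha
    have hpY : 0 < P.pY y := lt_of_lt_of_le hp (p_le_pY P x y)
    have hpX : 0 < P.pX x := lt_of_lt_of_le hp (p_le_pX P x y)
    have hQ : 0 < ∑ x', P.pX x' * e.c x' z :=
      lt_of_lt_of_le (mul_pos hpX hc) (Q_ge P e x z)
    have hR : 0 < ∑ x', P.p x' y * e.c x' z :=
      lt_of_lt_of_le ha (Finset.single_le_sum
        (fun x' _ => mul_nonneg (P.nonneg x' y) (e.nonneg x' z)) (Finset.mem_univ x))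
    have hb : 0 < P.p x y * (∑ x', P.p x' y * e.c x' z) / P.pY y := by positivity
    have hlog : Real.log (e.c x z / ∑ x', P.pX x' * e.c x' z) -
        Real.log ((∑ x', P.p x' y * e.c x' z) / (P.pY y * ∑ x', P.pX x' * e.c x' z)) =
        Real.log ((P.p x y * e.c x z) /
          (P.p x y * (∑ x', P.p x' y * e.c x' z) / P.pY y)) := by
      rw [← Real.log_div (by positivity) (by positivity)]
      congr 1
      field_simp
    have hk := key_ineq (P.p x y * e.c x z)
      (P.p x y * (∑ x', P.p x' y * e.c x' z) / P.pY y) ha.le hb.le (fun _ => hb)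
    rw [← mul_sub, hlog]
    exact hk
  · have ha0 : P.p x y * e.c x z = 0 :=
      le_antisymm (not_lt.1 ha) (mul_nonneg (P.nonneg x y) (e.nonneg x z))
    rw [ha0]
    have hb : 0 ≤ P.p x y * (∑ x', P.p x' y * e.c x' z) / P.pY y := by
      apply div_nonneg _ (pY_nonneg P y)
      exact mul_nonneg (P.nonneg x y) (R_nonneg P e y z)
    simp
    linarith

lemma sum_B (P : JointDist X Y) (e : Encoder X Z) :
    ∑ x, ∑ y, ∑ z, P.p x y * (∑ x', P.p x' y * e.c x' z) / P.pY y = 1 := by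
  rw [Finset.sum_comm (γ := X)]
  have hy : ∀ y, ∑ x, ∑ z, P.p x y * (∑ x', P.p x' y * e.c x' z) / P.pY y
      = ∑ z, ∑ x', P.p x' y * e.c x' z := by
    intro y
    rw [Finset.sum_comm (γ := X)]
    apply Finset.sum_congr rfl
    intro z _
    have : ∀ x, P.p x y * (∑ x', P.p x' y * e.c x' z) / P.pY y
        = P.p x y * ((∑ x', P.p x' y * e.c x' z) / P.pY y) := fun x => by
      rw [mul_div_assoc]
    simp only [this]
    rw [← Finset.sum_mul]
    rw [show ∑ x, P.p x y = P.pY y from rfl]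
    by_cases hY : P.pY y = 0
    · have hR0 : (∑ x', P.p x' y * e.c x' z) = 0 := by
        apply Finset.sum_eq_zero
        intro x' _
        have h1 : P.p x' y ≤ 0 := hY ▸ p_le_pY P x' y
        have h2 : P.p x' y = 0 := le_antisymm h1 (P.nonneg x' y)
        rw [h2, zero_mul]
      rw [hY, hR0]; simp
    · rw [mul_comm, div_mul_cancel₀ _ hY]
  simp only [hy]
  exact sum_R P e

lemma dpi (P : JointDist X Y) (e : Encoder X Z) : IYZ P e ≤ IXZ P e := by
  have hsum : ∑ x, ∑ y, ∑ z,
      (P.p x y * e.c x z - P.p x y * (∑ x', P.p x' y * e.c x' z) / P.pY y) ≤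
      ∑ x, ∑ y, ∑ z,
      (P.p x y * e.c x z * Real.log (e.c x z / ∑ x', P.pX x' * e.c x' z) -
       P.p x y * e.c x z *
        Real.log ((∑ x', P.p x' y * e.c x' z) / (P.pY y * ∑ x', P.pX x' * e.c x' z))) := by
    apply Finset.sum_le_sum; intro x _
    apply Finset.sum_le_sum; intro y _
    apply Finset.sum_le_sum; intro z _
    exact dpi_pointwise P e x y z
  have hA : ∑ x, ∑ y, ∑ z, P.p x y * e.c x z = 1 := by
    simp only [← Finset.mul_sum, e.sum_one, mul_one]
    exact P.sum_one
  have hL : ∑ x, ∑ y, ∑ z,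
      (P.p x y * e.c x z - P.p x y * (∑ x', P.p x' y * e.c x' z) / P.pY y) = 0 := by
    simp only [Finset.sum_sub_distrib]
    rw [hA, sum_B P e]; ring
  have hRt : ∑ x, ∑ y, ∑ z,
      (P.p x y * e.c x z * Real.log (e.c x z / ∑ x', P.pX x' * e.c x' z) -
       P.p x y * e.c x z *
        Real.log ((∑ x', P.p x' y * e.c x' z) / (P.pY y * ∑ x', P.pX x' * e.c x' z)))
      = IXZ P e - IYZ P e := by
    simp only [Finset.sum_sub_distrib]
    rw [← IXZ_eq P e, ← IYZ_eq P e]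
  rw [hL, hRt] at hsum
  linarith

/-- The inverse of the IB-learnability threshold equals the hypercontractivity
coefficient: `1/β₀ = ξ(X;Y) = sup_{Z − X − Y} I(Y;Z)/I(X;Z)`. -/
theorem inv_betaThreshold_eq_hyperXi (P : JointDist X Y) :
    (betaThreshold P)⁻¹ = hyperXi P := by
  classical
  set T := {r : ℝ | ∃ (n : ℕ) (e : Encoder X (Fin n)), 0 < IXZ P e ∧ r = IYZ P e / IXZ P e}
    with hTdef
  have hxi : hyperXi P = sSup T := rfl
  have hTnn : ∀ r ∈ T, 0 ≤ r := by
    rintro r ⟨n, e, hX, rfl⟩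
    exact div_nonneg (IYZ_nonneg P e) (IXZ_nonneg P e)
  have hTbdd : BddAbove T := by
    refine ⟨1, ?_⟩
    rintro r ⟨n, e, hX, rfl⟩
    exact div_le_one_of_le₀ (dpi P e) (IXZ_nonneg P e)
  rw [hxi]
  by_cases hT : T.Nonempty
  · have hξ0 : 0 ≤ sSup T := by
      obtain ⟨r, hr⟩ := hT
      exact (hTnn r hr).trans (le_csSup hTbdd hr)
    rcases hξ0.lt_or_eq with hpos | hzero
    · -- positive sup
      have hset : {β : ℝ | IBLearnable P β} = Set.Ioi (sSup T)⁻¹ := by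
        ext β
        simp only [Set.mem_setOf_eq, Set.mem_Ioi]
        constructor
        · rintro ⟨n, e, hlt⟩
          simp only [IB] at hlt
          have h1 : IXZ P e < β * IYZ P e := by linarith
          have hY : 0 < IYZ P e := by
            rcases (IYZ_nonneg P e).lt_or_eq with h | h
            · exact h
            · rw [← h, mul_zero] at h1
              exact absurd h1 (not_lt.2 (IXZ_nonneg P e))
          have hX : 0 < IXZ P e := lt_of_lt_of_le hY (dpi P e)
          have hmem : IYZ P e / IXZ P e ∈ T := ⟨n, e, hX, rfl⟩
          have hle : IYZ P e / IXZ P e ≤ sSup T := le_csSup hTbdd hmem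
          have h2 : IXZ P e / IYZ P e < β := (div_lt_iff₀ hY).2 (by linarith)
          have h3 : (sSup T)⁻¹ ≤ IXZ P e / IYZ P e := by
            rw [show IXZ P e / IYZ P e = (IYZ P e / IXZ P e)⁻¹ from (inv_div ..).symm]
            exact inv_anti₀ (div_pos hY hX) hle
          linarith
        · intro hβ
          have hβpos : 0 < β := lt_trans (inv_pos.2 hpos) hβ
          have hlt : β⁻¹ < sSup T := by
            rw [show sSup T = ((sSup T)⁻¹)⁻¹ from (inv_inv _).symm]
            exact inv_strictAnti₀ (inv_pos.2 hpos) hβ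
          obtain ⟨r, hrT, hr⟩ := exists_lt_of_lt_csSup hT hlt
          obtain ⟨n, e, hX, rfl⟩ := hrT
          refine ⟨n, e, ?_⟩
          have h2 : β⁻¹ * IXZ P e < IYZ P e := (lt_div_iff₀ hX).1 hr
          have h3 : IXZ P e < β * IYZ P e := by
            have := mul_lt_mul_of_pos_left h2 hβpos
            rwa [← mul_assoc, mul_inv_cancel₀ hβpos.ne', one_mul] at this
          simp only [IB]
          linarith
      rw [betaThreshold, hset, csInf_Ioi, inv_inv]
    · -- sSup T = 0 : no encoder is useful
      have hempty : {β : ℝ | IBLearnable P β} = ∅ := by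
        ext β
        simp only [Set.mem_setOf_eq, Set.mem_empty_iff_false, iff_false]
        rintro ⟨n, e, hlt⟩
        simp only [IB] at hlt
        have h1 : IXZ P e < β * IYZ P e := by linarith
        have hY0 : IYZ P e = 0 := by
          rcases (IXZ_nonneg P e).lt_or_eq with hX | hX
          · have hmem : IYZ P e / IXZ P e ∈ T := ⟨n, e, hX, rfl⟩
            have hle : IYZ P e / IXZ P e ≤ sSup T := le_csSup hTbdd hmem
            rw [← hzero] at hle
            have h0 : IYZ P e / IXZ P e = 0 :=
              le_antisymm hle (div_nonneg (IYZ_nonneg P e) (IXZ_nonneg P e))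
            rcases div_eq_zero_iff.1 h0 with h | h
            · exact h
            · exact absurd h hX.ne'
          · exact le_antisymm (hX ▸ dpi P e) (IYZ_nonneg P e)
        rw [hY0, mul_zero] at h1
        exact absurd h1 (not_lt.2 (IXZ_nonneg P e))
      rw [betaThreshold, hempty, Real.sInf_empty, inv_zero, ← hzero]
  · -- T empty
    have hTe : T = ∅ := Set.not_nonempty_iff_eq_empty.1 hT
    have hempty : {β : ℝ | IBLearnable P β} = ∅ := by
      ext β
      simp only [Set.mem_setOf_eq, Set.mem_empty_iff_false, iff_false]
      rintro ⟨n, e, hlt⟩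
      simp only [IB] at hlt
      have h1 : IXZ P e < β * IYZ P e := by linarith
      have hX0 : IXZ P e = 0 := by
        rcases (IXZ_nonneg P e).lt_or_eq with hX | hX
        · have hmem : IYZ P e / IXZ P e ∈ T := ⟨n, e, hX, rfl⟩
          rw [hTe] at hmem
          exact absurd hmem (Set.notMem_empty _)
        · exact hX.symm
      have hY0 : IYZ P e = 0 := le_antisymm (hX0 ▸ dpi P e) (IYZ_nonneg P e)
      rw [hY0, mul_zero] at h1
      exact absurd h1 (not_lt.2 (IXZ_nonneg P e))
    rw [betaThreshold, hempty, Real.sInf_empty, inv_zero, hTe, Real.sSup_empty]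
end

section
/- (What IB first learns at the onset of learning.) Consider the perturbed encoder p_β(z|x) = p(z) + ε·h(z|x) of the trivial representation, with product perturbation h(z|x) = h(x)·h₂(z) where ∫ h₂(z) dz = 0. Then the induced predictor p_β(y|x) = ∫ p_β(y|z) p_β(z|x) dz satisfies, up to second order in ε: p_β(y|x) = p(y) + ε²·C_z·(h(x) − h̄)·∫ p(x', y)(h(x') − h̄) dx' + O(ε³), where h̄ = ∫ h(x)p(x) dx and C_z = ∫ h₂(z)²/p(z) dz > 0; in particular, the first-order term in ε vanishes. -/
open Filter Asymptotics
open scoped BigOperators Topology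

variable {X Y Z : Type} [Fintype X] [Fintype Y] [Fintype Z]

/-- The predictor `p_β(y|x) = ∑_z (p_β(y,z)/p_β(z)) p_β(z|x)` induced by the perturbed encoder
`p_β(z|x) = q(z) + ε·h(x)h₂(z)` of the trivial representation, where
`p_β(y,z) = ∑_{x'} p(x',y) p_β(z|x')` and `p_β(z) = ∑_{x''} p(x'') p_β(z|x'')`. -/
noncomputable def perturbedPredictor (P : JointDist X Y) (q : Z → ℝ)
    (h : X → ℝ) (h₂ : Z → ℝ) (x : X) (y : Y) (ε : ℝ) : ℝ :=
  ∑ z, (∑ x', P.p x' y * (q z + ε * (h x' * h₂ z))) /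
      (∑ x'', P.pX x'' * (q z + ε * (h x'' * h₂ z))) *
    (q z + ε * (h x * h₂ z))

/-- (What IB first learns at the onset of learning.) Consider the perturbed
encoder `p_β(z|x) = q(z) + ε·h(z|x)` of the trivial representation, with product perturbation
`h(z|x) = h(x)·h₂(z)` where `∑ z, h₂(z) = 0` (and `h₂ ≠ 0`). Then `C_z = ∑ z, h₂(z)²/q(z) > 0`,
and the induced predictor satisfies, up to second order in `ε`,
`p_β(y|x) = p(y) + ε²·C_z·(h(x) − h̄)·∑_{x'} p(x',y)(h(x') − h̄) + O(ε³)`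
with `h̄ = ∑ x, p(x) h(x)`; in particular the first-order term in `ε` vanishes (the derivative
in `ε` at `ε = 0` is zero). -/
theorem perturbedPredictor_second_order_expansion (P : JointDist X Y)
    (q : Z → ℝ) (hq : ∀ z, 0 < q z) (hq1 : ∑ z, q z = 1)
    (h : X → ℝ) (h₂ : Z → ℝ) (hh₂ : ∑ z, h₂ z = 0) (hne : h₂ ≠ 0)
    (x : X) (y : Y) :
    (0 < ∑ z, (h₂ z) ^ 2 / q z) ∧
    HasDerivAt (perturbedPredictor P q h h₂ x y) 0 0 ∧
    (fun ε : ℝ =>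
        perturbedPredictor P q h h₂ x y ε -
          (P.pY y + ε ^ 2 * (∑ z, (h₂ z) ^ 2 / q z) *
            (h x - ∑ x', P.pX x' * h x') *
            (∑ x', P.p x' y * (h x' - ∑ x'', P.pX x'' * h x''))))
      =O[nhds (0 : ℝ)] fun ε => ε ^ 3 := by
  classical
  have hPX1 : ∑ x', P.pX x' = 1 := by
    simp only [JointDist.pX]; exact P.sum_one
  set a : ℝ := ∑ x', P.p x' y * h x' with ha
  set m : ℝ := ∑ x', P.pX x' * h x' with hm
  set py : ℝ := P.pY y with hpy
  set b : ℝ := h x with hb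
  set C : ℝ := ∑ z, (h₂ z) ^ 2 / q z with hC
  have hpy' : (∑ x', P.p x' y) = py := rfl
  -- the key rewriting of the predictor
  have key : ∀ ε : ℝ, perturbedPredictor P q h h₂ x y ε
      = ∑ z, (py * q z + ε * (a * h₂ z)) * (q z + ε * (b * h₂ z)) / (q z + ε * (m * h₂ z)) := by
    intro ε
    unfold perturbedPredictor
    refine Finset.sum_congr rfl fun z _ => ?_
    have hnum : (∑ x', P.p x' y * (q z + ε * (h x' * h₂ z))) = py * q z + ε * (a * h₂ z) := by
      rw [ha, ← hpy', Finset.sum_mul, Finset.sum_mul, Finset.mul_sum, ← Finset.sum_add_distrib]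
      exact Finset.sum_congr rfl fun x' _ => by ring
    have hden : (∑ x'', P.pX x'' * (q z + ε * (h x'' * h₂ z))) = q z + ε * (m * h₂ z) := by
      rw [hm]
      rw [show q z + ε * ((∑ x', P.pX x' * h x') * h₂ z)
          = (∑ x', P.pX x') * q z + ε * ((∑ x', P.pX x' * h x') * h₂ z) by rw [hPX1, one_mul]]
      rw [Finset.sum_mul, Finset.sum_mul, Finset.mul_sum, ← Finset.sum_add_distrib]
      exact Finset.sum_congr rfl fun x' _ => by ring
    rw [hnum, hden, div_mul_eq_mul_div, hb]
  -- positivity of C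
  have hCpos : 0 < C := by
    obtain ⟨z0, hz0⟩ : ∃ z, h₂ z ≠ 0 := by
      by_contra hcon; push_neg at hcon; exact hne (funext hcon)
    rw [hC]
    refine Finset.sum_pos' (fun z _ => div_nonneg (sq_nonneg _) (hq z).le) ⟨z0, Finset.mem_univ z0, ?_⟩
    exact div_pos (sq_pos_of_ne_zero hz0) (hq z0)
  -- the derivative at 0
  have hderiv : HasDerivAt (perturbedPredictor P q h h₂ x y) 0 0 := by
    have hfun : perturbedPredictor P q h h₂ x y
        = fun ε => ∑ z, (py * q z + ε * (a * h₂ z)) * (q z + ε * (b * h₂ z)) / (q z + ε * (m * h₂ z)) :=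
      funext key
    have hsum : HasDerivAt
        (fun ε : ℝ => ∑ z, (py * q z + ε * (a * h₂ z)) * (q z + ε * (b * h₂ z)) / (q z + ε * (m * h₂ z)))
        (∑ z, h₂ z * (a + py * b - py * m)) 0 := by
      apply HasDerivAt.fun_sum
      intro z _
      have hdz : (q z : ℝ) ≠ 0 := (hq z).ne'
      have h1 : HasDerivAt (fun ε : ℝ => py * q z + ε * (a * h₂ z)) (a * h₂ z) 0 := by
        simpa using ((hasDerivAt_id (0:ℝ)).mul_const (a * h₂ z)).const_add (py * q z)
      have h2 : HasDerivAt (fun ε : ℝ => q z + ε * (b * h₂ z)) (b * h₂ z) 0 := by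
        simpa using ((hasDerivAt_id (0:ℝ)).mul_const (b * h₂ z)).const_add (q z)
      have h3 : HasDerivAt (fun ε : ℝ => q z + ε * (m * h₂ z)) (m * h₂ z) 0 := by
        simpa using ((hasDerivAt_id (0:ℝ)).mul_const (m * h₂ z)).const_add (q z)
      have h4 := (h1.fun_mul h2).fun_div h3 (by simpa using hdz)
      convert h4 using 1
      rfl
      simp only [zero_mul, mul_zero, add_zero]
      field_simp
    have hD0 : (∑ z, h₂ z * (a + py * b - py * m)) = 0 := by
      rw [← Finset.sum_mul, hh₂, zero_mul]
    rw [hfun]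
    exact hD0 ▸ hsum
  -- positivity of denominators near 0
  have hev : ∀ᶠ ε in 𝓝 (0:ℝ), ∀ z, 0 < q z + ε * (m * h₂ z) := by
    rw [eventually_all]
    intro z
    have hc : Tendsto (fun ε : ℝ => q z + ε * (m * h₂ z)) (𝓝 0) (𝓝 (q z)) := by
      have hcont : Continuous fun ε : ℝ => q z + ε * (m * h₂ z) := by continuity
      simpa using hcont.tendsto 0
    exact hc.eventually (eventually_gt_nhds (hq z))
  -- the remainder function
  set g : ℝ → ℝ := fun ε => ∑ z,
      -(m * (h₂ z) ^ 3 * (a - py * m) * (b - m)) / (q z * (q z + ε * (m * h₂ z))) with hgdef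
  have e5 : (∑ x', P.p x' y * (h x' - m)) = a - py * m := by
    rw [ha, ← hpy']
    rw [Finset.sum_mul, ← Finset.sum_sub_distrib]
    exact Finset.sum_congr rfl fun x' _ => by ring
  have heq : (fun ε : ℝ => perturbedPredictor P q h h₂ x y ε
        - (py + ε ^ 2 * C * (b - m) * (∑ x', P.p x' y * (h x' - m))))
      =ᶠ[𝓝 (0:ℝ)] fun ε : ℝ => ε ^ 3 * g ε := by
    filter_upwards [hev] with ε hden
    rw [key ε, e5]
    have expand : ∀ z, (py * q z + ε * (a * h₂ z)) * (q z + ε * (b * h₂ z)) / (q z + ε * (m * h₂ z))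
        = py * q z + ε * (h₂ z * (a + py * b - py * m))
          + ε ^ 2 * ((h₂ z) ^ 2 / q z) * ((a - py * m) * (b - m))
          + ε ^ 3 * (-(m * (h₂ z) ^ 3 * (a - py * m) * (b - m)) / (q z * (q z + ε * (m * h₂ z)))) := by
      intro z
      have h1 : q z + ε * (m * h₂ z) ≠ 0 := (hden z).ne'
      have h2 : (q z : ℝ) ≠ 0 := (hq z).ne'
      obtain ⟨D, hD⟩ : ∃ D, D = q z + ε * (m * h₂ z) := ⟨_, rfl⟩
      rw [← hD] at h1 ⊢
      field_simp
      subst hD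
      ring
    rw [Finset.sum_congr rfl fun z _ => expand z]
    rw [Finset.sum_add_distrib, Finset.sum_add_distrib, Finset.sum_add_distrib]
    have e1 : (∑ z, py * q z) = py := by rw [← Finset.mul_sum, hq1, mul_one]
    have e2 : (∑ z, ε * (h₂ z * (a + py * b - py * m))) = 0 := by
      rw [← Finset.mul_sum, ← Finset.sum_mul, hh₂, zero_mul, mul_zero]
    have e3 : (∑ z, ε ^ 2 * ((h₂ z) ^ 2 / q z) * ((a - py * m) * (b - m)))
        = ε ^ 2 * C * ((a - py * m) * (b - m)) := by
      rw [hC, ← Finset.sum_mul, ← Finset.mul_sum]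
    have e4 : (∑ z, ε ^ 3 * (-(m * (h₂ z) ^ 3 * (a - py * m) * (b - m)) / (q z * (q z + ε * (m * h₂ z)))))
        = ε ^ 3 * g ε := by
      rw [hgdef, ← Finset.mul_sum]
    rw [e1, e2, e3, e4]
    ring
  -- continuity of the remainder
  have hgt : Tendsto g (𝓝 0)
      (𝓝 (∑ z, -(m * (h₂ z) ^ 3 * (a - py * m) * (b - m)) / (q z * (q z + 0 * (m * h₂ z))))) := by
    rw [hgdef]
    refine tendsto_finset_sum _ fun z _ => ?_
    have hdc : Tendsto (fun ε : ℝ => q z * (q z + ε * (m * h₂ z))) (𝓝 0)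
        (𝓝 (q z * (q z + 0 * (m * h₂ z)))) := by
      have : Continuous fun ε : ℝ => q z * (q z + ε * (m * h₂ z)) := by continuity
      exact this.tendsto 0
    exact tendsto_const_nhds.div hdc (by simpa using (mul_pos (hq z) (hq z)).ne')
  have hO : (fun ε : ℝ => ε ^ 3 * g ε) =O[𝓝 (0:ℝ)] fun ε : ℝ => ε ^ 3 := by
    have h1 : (fun ε : ℝ => ε ^ 3) =O[𝓝 (0:ℝ)] fun ε : ℝ => ε ^ 3 := isBigO_refl _ _
    have h2 : g =O[𝓝 (0:ℝ)] (fun _ : ℝ => (1:ℝ)) := hgt.isBigO_one ℝ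
    simpa using h1.mul h2
  refine ⟨hCpos, hderiv, ?_⟩
  exact hO.congr' heq.symm EventuallyEq.rfl
end
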